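/- arXiv:1203.3086 — 3 statements merged into one kernel-verified Lean document; each statement's English description precedes it below -/
import Mathlib

section
/- (Fefferman–de la Llave identity) For all x, y ∈ ℝ³ with x ≠ y one has 1/‖x−y‖ = ∫₀^∞ (1/(π r⁵)) ∫_{ℝ³} χ_{B(z,r)}(x) · χ_{B(z,r)}(y) dz dr, where the inner integral is over z ∈ ℝ³ with respect to Lebesgue measure. -/
/-!
The inner integral is the volume of the lens `B(x, r) ∩ B(y, r)`, which depends only on
`d = ‖x - y‖`: it vanishes for `r ≤ d / 2`, and for `r ≥ d / 2` slicing orthogonally to `x - y`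
into disks of area `π · min (r² - t², r² - (t - d)²)` gives `(π / 12) (2r - d)² (4r + d)`.
Divided by `π r⁵`, this has the antiderivative `P (1 / r)` on `(d / 2, ∞)`, where
`P u = -4u/3 + d u²/2 - d³ u⁴/48`, so the radial integral is `0 - P (2 / d) = 1 / d`.
-/

open MeasureTheory Set Metric Real Filter Topology

theorem integral_indicator_closedBall_mul_indicator_closedBall {X : Type*} [PseudoMetricSpace X]
    [MeasurableSpace X] [OpensMeasurableSpace X] (μ : Measure X) (x y : X) (r : ℝ) :
    ∫ z, (closedBall z r).indicator (fun _ => (1 : ℝ)) x *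
        (closedBall z r).indicator (fun _ => (1 : ℝ)) y ∂μ =
      μ.real (closedBall x r ∩ closedBall y r) := by
  rw [← integral_indicator_one (measurableSet_closedBall.inter measurableSet_closedBall)]
  congr 1 with z
  simp only [indicator, mem_closedBall, mem_inter_iff, dist_comm z, Pi.one_apply]
  split_ifs <;> simp_all

theorem volume_closedBall_inter_closedBall_congr {E : Type*} [NormedAddCommGroup E]
    [InnerProductSpace ℝ E] [FiniteDimensional ℝ E] [MeasurableSpace E] [BorelSpace E]
    {x y x' y' : E} (h : dist x y = dist x' y') (r : ℝ) :
    volume (closedBall x r ∩ closedBall y r) = volume (closedBall x' r ∩ closedBall y' r) := by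
  have hnorm : ‖y - x‖ = ‖y' - x'‖ := by
    rw [← dist_eq_norm, ← dist_eq_norm, dist_comm, h, dist_comm]
  set e := Submodule.reflection (ℝ ∙ ((y - x) - (y' - x')))ᗮ
  have he : e (y - x) = y' - x' := Submodule.reflection_sub hnorm
  have hmp : MeasurePreserving (fun z => e (z - x) + x') :=
    (measurePreserving_add_right volume x').comp
      (e.measurePreserving.comp (measurePreserving_sub_right volume x))
  have hpre : (fun z => e (z - x) + x') ⁻¹' (closedBall x' r ∩ closedBall y' r) =
      closedBall x r ∩ closedBall y r := by
    ext z
    have hy : e (z - x) + x' - y' = e (z - y) := by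
      rw [← sub_sub_sub_cancel_right z y x, map_sub e (z - x), he]
      abel
    simp only [mem_preimage, mem_inter_iff, mem_closedBall, dist_eq_norm, add_sub_cancel_right,
      hy, e.norm_map]
  rw [← hpre, hmp.measure_preimage
    (measurableSet_closedBall.inter measurableSet_closedBall).nullMeasurableSet]

noncomputable def lensVolume (d r : ℝ) : ℝ := π / 12 * (2 * r - d) ^ 2 * (4 * r + d)

theorem lensVolume_nonneg {d r : ℝ} (hd : 0 ≤ d) (hdr : d ≤ 2 * r) : 0 ≤ lensVolume d r :=
  mul_nonneg (by positivity) (by linarith)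

theorem lintegral_ofReal_pi_mul_min_sub_sq {d r : ℝ} (hd : 0 ≤ d) (hdr : d ≤ 2 * r) :
    ∫⁻ t, ENNReal.ofReal (π * min (r ^ 2 - t ^ 2) (r ^ 2 - (t - d) ^ 2)) =
      ENNReal.ofReal (lensVolume d r) := by
  set g : ℝ → ℝ := fun t => π * min (r ^ 2 - t ^ 2) (r ^ 2 - (t - d) ^ 2)
  have hg : Continuous g := by fun_prop
  have hsupp : (fun t => ENNReal.ofReal (g t)).support ⊆ Icc (d - r) r := by
    intro t ht
    by_contra hmem
    refine ht (ENNReal.ofReal_of_nonpos (mul_nonpos_of_nonneg_of_nonpos pi_pos.le ?_))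
    rcases not_and_or.mp hmem with h | h <;> rw [not_le] at h
    · exact (min_le_right _ _).trans (by nlinarith)
    · exact (min_le_left _ _).trans (by nlinarith)
  have hpos : ∀ t ∈ Icc (d - r) r, 0 ≤ g t := fun t ⟨h₁, h₂⟩ =>
    mul_nonneg pi_pos.le (le_min (by nlinarith) (by nlinarith))
  rw [← setLIntegral_eq_of_support_subset hsupp, ← ofReal_integral_eq_lintegral_ofReal
    hg.integrableOn_Icc (ae_restrict_of_forall_mem measurableSet_Icc hpos),
    integral_Icc_eq_integral_Ioc, ← intervalIntegral.integral_of_le (by linarith),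
    ← intervalIntegral.integral_add_adjacent_intervals (b := d / 2)
      (hg.intervalIntegrable _ _) (hg.intervalIntegrable _ _)]
  have h_left : EqOn g (fun t => π * (r ^ 2 - (t - d) ^ 2)) (uIcc (d - r) (d / 2)) := by
    intro t ht
    rw [uIcc_of_le (by linarith)] at ht
    simp only [g, min_eq_right (by nlinarith [ht.2] : r ^ 2 - (t - d) ^ 2 ≤ r ^ 2 - t ^ 2)]
  have h_right : EqOn g (fun t => π * (r ^ 2 - t ^ 2)) (uIcc (d / 2) r) := by
    intro t ht
    rw [uIcc_of_le (by linarith)] at ht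
    simp only [g, min_eq_left (by nlinarith [ht.1] : r ^ 2 - t ^ 2 ≤ r ^ 2 - (t - d) ^ 2)]
  rw [intervalIntegral.integral_congr h_left, intervalIntegral.integral_congr h_right]
  simp only [intervalIntegral.integral_comp_sub_right (fun t => π * (r ^ 2 - t ^ 2)),
    sub_sub_cancel_left, intervalIntegral.integral_const_mul, intervalIntegrable_const,
    intervalIntegral.intervalIntegrable_pow, intervalIntegral.integral_sub,
    intervalIntegral.integral_const, sub_neg_eq_add, smul_eq_mul, integral_pow, Nat.reduceAdd,
    Nat.cast_ofNat, lensVolume]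
  congr 1
  ring

theorem integral_Ioi_lensVolume_div {d : ℝ} (hd : 0 < d) :
    ∫ r in Ioi (d / 2), lensVolume d r / (π * r ^ 5) = 1 / d := by
  set P : ℝ → ℝ := fun u => -(4 / 3) * u + d / 2 * u ^ 2 - d ^ 3 / 48 * u ^ 4
  have hP : ∀ u, HasDerivAt P (-(4 / 3) + d * u - d ^ 3 / 12 * u ^ 3) u := fun u =>
    (((hasDerivAt_id' u).const_mul _).add ((hasDerivAt_pow 2 u).const_mul _)
      |>.sub ((hasDerivAt_pow 4 u).const_mul _)).congr_deriv (by ring)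
  have hderiv : ∀ r ∈ Ioi (d / 2),
      HasDerivAt (fun r => P r⁻¹) (lensVolume d r / (π * r ^ 5)) r := by
    intro r hr
    have hr0 : r ≠ 0 := (lt_trans (half_pos hd) hr).ne'
    refine ((hP r⁻¹).comp r (hasDerivAt_inv hr0)).congr_deriv ?_
    simp only [lensVolume]
    field_simp
    ring
  have hnonneg : ∀ r ∈ Ioi (d / 2), 0 ≤ lensVolume d r / (π * r ^ 5) := fun r hr => by
    have hr0 : 0 < r := lt_trans (half_pos hd) hr
    exact div_nonneg (lensVolume_nonneg hd.le (by linarith [mem_Ioi.mp hr])) (by positivity)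
  have hlim : Tendsto (fun r => P r⁻¹) atTop (𝓝 0) := by
    have hP0 : P 0 = 0 := by simp [P]
    exact hP0 ▸ (hP 0).continuousAt.tendsto.comp tendsto_inv_atTop_zero
  rw [integral_Ioi_of_hasDerivAt_of_nonneg
    ((hP _).continuousAt.comp (continuousAt_inv₀ (half_pos hd).ne')).continuousWithinAt
    hderiv hnonneg hlim]
  show 0 - P (d / 2)⁻¹ = 1 / d
  simp only [P]
  field_simp
  ring

namespace EuclideanSpace

theorem volume_eq_lintegral_volume_cons {n : ℕ} {S : Set (EuclideanSpace ℝ (Fin (n + 1)))}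
    (hS : MeasurableSet S) :
    volume S = ∫⁻ t : ℝ,
      volume {v : EuclideanSpace ℝ (Fin n) | WithLp.toLp 2 (Fin.cons t v.ofLp) ∈ S} := by
  set e := MeasurableEquiv.piFinSuccAbove (fun _ : Fin (n + 1) => ℝ) 0
  have he : MeasurePreserving e.symm :=
    (volume_preserving_piFinSuccAbove (fun _ : Fin (n + 1) => ℝ) 0).symm e
  have hS' : MeasurableSet (WithLp.toLp 2 ⁻¹' S) :=
    (PiLp.volume_preserving_toLp (Fin (n + 1))).measurable hS
  have hT : MeasurableSet (e.symm ⁻¹' (WithLp.toLp 2 ⁻¹' S)) := e.symm.measurable hS'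
  rw [← (PiLp.volume_preserving_toLp (Fin (n + 1))).measure_preimage hS.nullMeasurableSet,
    ← he.measure_preimage hS'.nullMeasurableSet, Measure.volume_eq_prod, Measure.prod_apply hT]
  congr 1 with t
  rw [← (PiLp.volume_preserving_ofLp (Fin n)).measure_preimage
    (measurable_prodMk_left hT).nullMeasurableSet]
  simp only [e, MeasurableEquiv.piFinSuccAbove_symm_apply, Fin.insertNthEquiv_zero]
  rfl

theorem norm_sq_toLp_cons {n : ℕ} (t : ℝ) (v : EuclideanSpace ℝ (Fin n)) :
    ‖(WithLp.toLp 2 (Fin.cons t v.ofLp) : EuclideanSpace ℝ (Fin (n + 1)))‖ ^ 2 =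
      t ^ 2 + ‖v‖ ^ 2 := by
  simp [norm_sq_eq, Fin.sum_univ_succ]

theorem toLp_cons_sub_single_zero {n : ℕ} (t d : ℝ) (v : EuclideanSpace ℝ (Fin n)) :
    (WithLp.toLp 2 (Fin.cons t v.ofLp) : EuclideanSpace ℝ (Fin (n + 1))) - single 0 d =
      WithLp.toLp 2 (Fin.cons (t - d) v.ofLp) := by
  ext i
  cases i using Fin.cases <;> simp [Fin.succ_ne_zero]

theorem volume_closedBall_inter_closedBall_single_zero {n : ℕ} {r : ℝ} (hr : 0 ≤ r) (d : ℝ) :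
    volume (closedBall (0 : EuclideanSpace ℝ (Fin (n + 1))) r ∩ closedBall (single 0 d) r) =
      ∫⁻ t : ℝ, volume {v : EuclideanSpace ℝ (Fin n) |
        ‖v‖ ^ 2 ≤ min (r ^ 2 - t ^ 2) (r ^ 2 - (t - d) ^ 2)} := by
  rw [volume_eq_lintegral_volume_cons (measurableSet_closedBall.inter measurableSet_closedBall)]
  congr 1 with t
  congr 1 with v
  simp only [mem_ofPred_eq, mem_inter_iff, mem_closedBall, dist_eq_norm, sub_zero,
    toLp_cons_sub_single_zero, le_min_iff, ← sq_le_sq₀ (norm_nonneg _) hr, norm_sq_toLp_cons]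
  constructor <;> rintro ⟨h₁, h₂⟩ <;> constructor <;> linarith

theorem volume_setOf_norm_sq_le_fin_two (c : ℝ) :
    volume {v : EuclideanSpace ℝ (Fin 2) | ‖v‖ ^ 2 ≤ c} = ENNReal.ofReal (π * c) := by
  rcases lt_or_ge c 0 with hc | hc
  · have : {v : EuclideanSpace ℝ (Fin 2) | ‖v‖ ^ 2 ≤ c} = ∅ :=
      eq_empty_of_forall_notMem fun v hv => (hc.trans_le (by positivity)).not_ge hv
    rw [this, measure_empty,
      ENNReal.ofReal_of_nonpos (mul_nonpos_of_nonneg_of_nonpos pi_pos.le hc.le)]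
  · have : {v : EuclideanSpace ℝ (Fin 2) | ‖v‖ ^ 2 ≤ c} = closedBall 0 √c := by
      ext v
      rw [mem_ofPred_eq, mem_closedBall_zero_iff, le_sqrt (norm_nonneg v) hc]
    rw [this, volume_closedBall_fin_two, ← ENNReal.ofReal_pow (sqrt_nonneg c), sq_sqrt hc,
      ← ENNReal.ofReal_mul hc, mul_comm]

theorem volume_closedBall_inter_closedBall_fin_three {x y : EuclideanSpace ℝ (Fin 3)} {r : ℝ}
    (h : dist x y ≤ 2 * r) :
    volume (closedBall x r ∩ closedBall y r) = ENNReal.ofReal (lensVolume (dist x y) r) := by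
  have hdist : dist x y = dist 0 (single (0 : Fin 3) (dist x y)) := by
    rw [dist_zero_left, PiLp.norm_single, norm_of_nonneg dist_nonneg]
  rw [volume_closedBall_inter_closedBall_congr hdist,
    volume_closedBall_inter_closedBall_single_zero (by linarith [dist_nonneg (x := x) (y := y)])]
  simp_rw [volume_setOf_norm_sq_le_fin_two]
  exact lintegral_ofReal_pi_mul_min_sub_sq dist_nonneg h

theorem volume_closedBall_inter_closedBall_fin_three_of_le {x y : EuclideanSpace ℝ (Fin 3)}
    {r : ℝ} (h : 2 * r ≤ dist x y) :
    volume (closedBall x r ∩ closedBall y r) = 0 := by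
  rcases h.lt_or_eq with h | h
  · rw [(closedBall_disjoint_closedBall (by linarith)).inter_eq, measure_empty]
  · rw [volume_closedBall_inter_closedBall_fin_three h.ge, ← h]
    simp [lensVolume]

end EuclideanSpace

/-- The Fefferman--de la Llave identity: for `x ≠ y` in `ℝ³`,
`1/‖x−y‖ = ∫₀^∞ dr/(π r⁵) ∫_{ℝ³} χ_{B(z,r)}(x) χ_{B(z,r)}(y) dz`. -/
theorem fefferman_de_la_llave (x y : EuclideanSpace ℝ (Fin 3)) (hxy : x ≠ y) :
    1 / ‖x - y‖ =
      ∫ r in Set.Ioi (0 : ℝ),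
        (1 / (Real.pi * r ^ 5)) *
          ∫ z : EuclideanSpace ℝ (Fin 3),
            (Metric.closedBall z r).indicator (fun _ => (1 : ℝ)) x *
            (Metric.closedBall z r).indicator (fun _ => (1 : ℝ)) y := by
  have hd : 0 < dist x y := dist_pos.mpr hxy
  simp_rw [integral_indicator_closedBall_mul_indicator_closedBall]
  rw [← dist_eq_norm, ← integral_Ioi_lensVolume_div hd,
    setIntegral_eq_of_subset_of_forall_sdiff_eq_zero measurableSet_Ioi
      (Ioi_subset_Ioi (half_pos hd).le) fun r hr => ?_]
  · refine setIntegral_congr_fun measurableSet_Ioi fun r hr => ?_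
    have hr : dist x y ≤ 2 * r := by linarith [mem_Ioi.mp hr]
    rw [measureReal_def, EuclideanSpace.volume_closedBall_inter_closedBall_fin_three hr,
      ENNReal.toReal_ofReal (lensVolume_nonneg hd.le hr), one_div_mul_eq_div]
  · obtain ⟨-, hr⟩ := hr
    rw [mem_Ioi, not_lt] at hr
    rw [measureReal_def,
      EuclideanSpace.volume_closedBall_inter_closedBall_fin_three_of_le (by linarith),
      ENNReal.toReal_zero, mul_zero]
end

section
/- Let X be an orthogonal projection on ℋ, let P, P^⊥ be the spectral projections of γ for eigenvalues > 1/2 and ≤ 1/2, and suppose (γ,Γ) is admissible and fulfills the P-condition. Then |tr_{ℋ⊗ℋ}((P^⊥XP⊗PXP^⊥)Γ)| ≤ tr_{ℋ⊗ℋ}((PXP⊗P^⊥XP^⊥)Γ). -/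
/-!
With `C = X P` and `D = X P⊥`, the two operators are `(D ⊗ C)* (C ⊗ D)` and `(C ⊗ D)* (C ⊗ D)`,
and `D ⊗ C = Ex (C ⊗ D) Ex`. Write `Γ = S²` with `S = √Γ`; since `ker Γ = ker S`, the relation
`Γ Ex = -Γ` passes to `S`, and then `Ex S = -S`. Cyclicity of the trace for the Hilbert–Schmidt
operator `S` turns both traces into `∑ᵢ ⟪L S eᵢ, K S eᵢ⟫` with `L = Ex K Ex` resp. `L = K`, and
`‖Ex K Ex S eᵢ‖ = ‖K S eᵢ‖` because `Ex` is unitary. Cauchy–Schwarz term by term concludes.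
-/

open scoped ComplexOrder
open ContinuousLinearMap

noncomputable section

/-- The trace of an operator computed relative to a Hilbert basis. For trace-class
operators this is the (basis-independent) trace. -/
def trB {H : Type*} [NormedAddCommGroup H] [InnerProductSpace ℂ H] {ι : Type*}
    (b : HilbertBasis ι ℂ H) (T : H →L[ℂ] H) : ℂ :=
  ∑' i, (inner ℂ (b i) (T (b i)) : ℂ)

/-- `T` is trace class: the sum of the diagonal matrix elements of `|T| = √(T*T)`
relative to the Hilbert basis `b` converges. -/
def IsTraceClass {H : Type*} [NormedAddCommGroup H] [InnerProductSpace ℂ H]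
    [CompleteSpace H] {ι : Type*} (b : HilbertBasis ι ℂ H) (T : H →L[ℂ] H) : Prop :=
  Summable fun i => (inner ℂ (b i) (CFC.sqrt (adjoint T * T) (b i)) : ℂ)

/-- A Hilbert-space tensor product structure: `H2` plays the role of the Hilbert tensor
product `H ⊗ H`, `tmul` is the (bilinear) elementary tensor map, `map A B` is the
operator `A ⊗ B`, and `ex` is the exchange operator (the unitary with `Ex (f⊗g) = g⊗f`). -/
structure HilbertTensor (H : Type*) (H2 : Type*)
    [NormedAddCommGroup H] [InnerProductSpace ℂ H] [CompleteSpace H]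
    [NormedAddCommGroup H2] [InnerProductSpace ℂ H2] [CompleteSpace H2] where
  tmul : H →ₗ[ℂ] H →ₗ[ℂ] H2
  inner_tmul : ∀ f g f' g',
    (inner ℂ (tmul f g) (tmul f' g') : ℂ) = (inner ℂ f f' : ℂ) * (inner ℂ g g' : ℂ)
  dense_span : Dense (↑(Submodule.span ℂ (Set.range fun p : H × H => tmul p.1 p.2)) : Set H2)
  map : (H →L[ℂ] H) → (H →L[ℂ] H) → (H2 →L[ℂ] H2)
  map_tmul : ∀ A B f g, map A B (tmul f g) = tmul (A f) (B g)
  ex : H2 →L[ℂ] H2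
  ex_tmul : ∀ f g, ex (tmul f g) = tmul g f

open scoped InnerProductSpace

section Trace

variable {E : Type*} [NormedAddCommGroup E] [InnerProductSpace ℂ E]

theorem eq_of_forall_inner_eq_of_dense_span {s : Set E}
    (hs : Dense (Submodule.span ℂ s : Set E)) {v w : E} (h : ∀ x ∈ s, ⟪x, v⟫_ℂ = ⟪x, w⟫_ℂ) :
    v = w := by
  have : innerSL ℂ v = innerSL ℂ w := ContinuousLinearMap.ext_on hs fun x hx => by
    rw [innerSL_apply_apply, innerSL_apply_apply, ← inner_conj_symm, h x hx, inner_conj_symm]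
  exact ext_inner_right ℂ fun x => by simpa using DFunLike.congr_fun this x

variable {ι : Type*} (b : HilbertBasis ι ℂ E)

theorem HilbertBasis.dense_span_range : Dense (Submodule.span ℂ (Set.range b) : Set E) :=
  Submodule.dense_iff_topologicalClosure_eq_top.mpr b.dense_span

theorem HilbertBasis.hasSum_norm_inner_sq (u : E) :
    HasSum (fun i => ‖⟪b i, u⟫_ℂ‖ ^ 2) (‖u‖ ^ 2) := by
  simpa [b.repr_apply_apply, b.repr.norm_map] using
    lp.hasSum_norm (p := 2) (by norm_num) (b.repr u)

theorem HilbertBasis.summable_norm_inner_sq_prod {κ : Type*} {v : κ → E}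
    (hv : Summable fun j => ‖v j‖ ^ 2) : Summable fun p : κ × ι => ‖⟪b p.2, v p.1⟫_ℂ‖ ^ 2 :=
  (summable_prod_of_nonneg fun _ => by positivity).mpr
    ⟨fun j => (b.hasSum_norm_inner_sq (v j)).summable,
      hv.congr fun j => (b.hasSum_norm_inner_sq (v j)).tsum_eq.symm⟩

theorem ContinuousLinearMap.summable_norm_sq_comp {κ : Type*} (M : E →L[ℂ] E) {v : κ → E}
    (hv : Summable fun j => ‖v j‖ ^ 2) : Summable fun j => ‖M (v j)‖ ^ 2 :=
  (hv.mul_left (‖M‖ ^ 2)).of_nonneg_of_le (fun _ => by positivity) fun j => by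
    rw [← mul_pow]
    gcongr
    exact M.le_opNorm _

theorem norm_tsum_inner_le_tsum_norm_sq {x y : ι → E} (hxy : ∀ i, ‖x i‖ = ‖y i‖)
    (hy : Summable fun i => ‖y i‖ ^ 2) : ‖∑' i, ⟪x i, y i⟫_ℂ‖ ≤ ∑' i, ‖y i‖ ^ 2 := by
  have hle : ∀ i, ‖⟪x i, y i⟫_ℂ‖ ≤ ‖y i‖ ^ 2 := fun i =>
    (norm_inner_le_norm _ _).trans_eq (by rw [hxy, sq])
  have hs := hy.of_nonneg_of_le (fun _ => norm_nonneg _) hle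
  exact (norm_tsum_le_tsum_norm hs).trans (hs.tsum_le_tsum hle hy)

variable [CompleteSpace E]

theorem HilbertBasis.isSelfAdjoint_of_apply_eq_smul {A : E →L[ℂ] E} (c : ι → ℝ)
    (h : ∀ k, A (b k) = (c k : ℂ) • b k) : IsSelfAdjoint A := by
  rw [IsSelfAdjoint, star_eq_adjoint]
  refine ContinuousLinearMap.ext_on b.dense_span_range ?_
  rintro _ ⟨k, rfl⟩
  refine eq_of_forall_inner_eq_of_dense_span b.dense_span_range ?_
  rintro _ ⟨j, rfl⟩
  rw [adjoint_inner_right, h, h, inner_smul_left, inner_smul_right,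
    Complex.conj_ofReal]
  rcases eq_or_ne j k with rfl | hjk
  · rfl
  · rw [b.orthonormal.2 hjk, mul_zero, mul_zero]

theorem trB_mul_comm {A B : E →L[ℂ] E} (hA : Summable fun i => ‖A (b i)‖ ^ 2)
    (hB : Summable fun i => ‖B (b i)‖ ^ 2) : trB b (A * B) = trB b (B * A) := by
  set f : ι → ι → ℂ := fun i j => ⟪b i, A (b j)⟫_ℂ * ⟪b j, B (b i)⟫_ℂ
  have hf : Summable (Function.uncurry f) := by
    refine Summable.of_norm_bounded
      (((b.summable_norm_inner_sq_prod hA).prod_symm.add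
        (b.summable_norm_inner_sq_prod hB)).div_const 2) fun p => ?_
    simp only [Function.uncurry, f, norm_mul, Prod.fst_swap, Prod.snd_swap]
    nlinarith [sq_nonneg (‖⟪b p.1, A (b p.2)⟫_ℂ‖ - ‖⟪b p.2, B (b p.1)⟫_ℂ‖)]
  calc trB b (A * B) = ∑' i, ∑' j, f i j := by
        refine tsum_congr fun i => ?_
        rw [mul_apply_eq_comp, ← adjoint_inner_left,
          ← b.tsum_inner_mul_inner]
        simp only [adjoint_inner_left, f]
    _ = ∑' j, ∑' i, f i j := hf.tsum_comm.symm
    _ = trB b (B * A) := by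
        refine tsum_congr fun j => ?_
        rw [mul_apply_eq_comp, ← adjoint_inner_left,
          ← b.tsum_inner_mul_inner]
        simp only [adjoint_inner_left, f, mul_comm]

theorem trB_mul_mul_self {S : E →L[ℂ] E} (hS : IsSelfAdjoint S)
    (hSb : Summable fun i => ‖S (b i)‖ ^ 2) (M : E →L[ℂ] E) :
    trB b (M * (S * S)) = ∑' i, ⟪S (b i), M (S (b i))⟫_ℂ := by
  have hMS : Summable fun i => ‖(M * S) (b i)‖ ^ 2 := by
    simpa only [mul_apply_eq_comp] using M.summable_norm_sq_comp hSb
  rw [← mul_assoc, trB_mul_comm b hMS hSb]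
  exact tsum_congr fun i => (hS.isSymmetric _ _).symm

end Trace

section PositiveOperator

variable {E : Type*} [NormedAddCommGroup E] [InnerProductSpace ℂ E] [CompleteSpace E]
  {Γ : E →L[ℂ] E}

theorem inner_sqrt_apply_sqrt_apply (hΓ : 0 ≤ Γ) (u : E) :
    ⟪CFC.sqrt Γ u, CFC.sqrt Γ u⟫_ℂ = ⟪u, Γ u⟫_ℂ := by
  conv_rhs => rw [← CFC.sqrt_mul_sqrt_self Γ hΓ]
  exact (IsSelfAdjoint.of_nonneg (CFC.sqrt_nonneg Γ)).isSymmetric _ _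

theorem IsTraceClass.summable_norm_sqrt_apply_sq {ι : Type*} {b : HilbertBasis ι ℂ E}
    (h : IsTraceClass b Γ) (hΓ : 0 ≤ Γ) : Summable fun i => ‖CFC.sqrt Γ (b i)‖ ^ 2 := by
  have hΓabs : CFC.sqrt (adjoint Γ * Γ) = Γ := by
    rw [← star_eq_adjoint, (IsSelfAdjoint.of_nonneg hΓ).star_eq,
      CFC.sqrt_mul_self Γ hΓ]
  rw [IsTraceClass, hΓabs] at h
  refine Complex.summable_ofReal.mp (h.congr fun i => ?_)
  rw [← inner_sqrt_apply_sqrt_apply hΓ, inner_self_eq_norm_sq_to_K]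
  push_cast
  rfl

theorem sqrt_mul_eq_neg_of_mul_eq_neg {U : E →L[ℂ] E} (hΓ : 0 ≤ Γ) (hΓU : Γ * U = -Γ) :
    CFC.sqrt Γ * U = -CFC.sqrt Γ := by
  ext u
  have hker : Γ (u + U u) = 0 := by
    rw [map_add, ← mul_apply_eq_comp, hΓU, neg_apply, add_neg_cancel]
  have : CFC.sqrt Γ (u + U u) = 0 := by
    rw [← inner_self_eq_zero (𝕜 := ℂ), inner_sqrt_apply_sqrt_apply hΓ, hker, inner_zero_right]
  rw [map_add] at this
  exact eq_neg_of_add_eq_zero_right this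

end PositiveOperator

theorem IsStarProjection.star_mul_mul_mul {R : Type*} [Semiring R] [StarMul R] {X : R}
    (hX : IsStarProjection X) (A B : R) : star (X * A) * (X * B) = star A * X * B := by
  rw [star_mul, hX.isSelfAdjoint.star_eq, mul_assoc, ← mul_assoc X X, hX.isIdempotentElem.eq,
    ← mul_assoc]

namespace HilbertTensor

variable {H H2 : Type*} [NormedAddCommGroup H] [InnerProductSpace ℂ H] [CompleteSpace H]
  [NormedAddCommGroup H2] [InnerProductSpace ℂ H2] [CompleteSpace H2] (T : HilbertTensor H H2)

theorem clm_ext {A B : H2 →L[ℂ] H2} (h : ∀ f g, A (T.tmul f g) = B (T.tmul f g)) : A = B :=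
  ContinuousLinearMap.ext_on T.dense_span (by rintro _ ⟨⟨f, g⟩, rfl⟩; exact h f g)

theorem star_eq_of_inner_tmul {M N : H2 →L[ℂ] H2}
    (h : ∀ f g f' g', ⟪M (T.tmul f g), T.tmul f' g'⟫_ℂ = ⟪T.tmul f g, N (T.tmul f' g')⟫_ℂ) :
    star M = N := by
  refine T.clm_ext fun f' g' => eq_of_forall_inner_eq_of_dense_span T.dense_span ?_
  rintro _ ⟨⟨f, g⟩, rfl⟩
  rw [star_eq_adjoint, adjoint_inner_right, h]

theorem map_mul (A B A' B' : H →L[ℂ] H) :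
    T.map A B * T.map A' B' = T.map (A * A') (B * B') :=
  T.clm_ext fun f g => by simp only [mul_apply_eq_comp, T.map_tmul]

theorem star_map (A B : H →L[ℂ] H) : star (T.map A B) = T.map (star A) (star B) :=
  T.star_eq_of_inner_tmul fun f g f' g' => by
    simp only [T.map_tmul, T.inner_tmul, star_eq_adjoint,
      adjoint_inner_right]

theorem ex_mul_map_mul_ex (A B : H →L[ℂ] H) : T.ex * T.map A B * T.ex = T.map B A :=
  T.clm_ext fun f g => by simp only [mul_apply_eq_comp, T.ex_tmul, T.map_tmul]

theorem isSelfAdjoint_ex : IsSelfAdjoint T.ex :=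
  T.star_eq_of_inner_tmul fun f g f' g' => by simp only [T.ex_tmul, T.inner_tmul, mul_comm]

theorem ex_mem_unitary : T.ex ∈ unitary (H2 →L[ℂ] H2) := by
  have hsq : T.ex * T.ex = 1 :=
    T.clm_ext fun f g => by simp only [mul_apply_eq_comp, T.ex_tmul, one_apply_eq_self]
  rw [Unitary.mem_iff, T.isSelfAdjoint_ex.star_eq, hsq, and_self]

end HilbertTensor

section Antisymmetric

variable {E : Type*} [NormedAddCommGroup E] [InnerProductSpace ℂ E] [CompleteSpace E]
  {ι : Type*} (b : HilbertBasis ι ℂ E)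

theorem norm_trB_adjoint_conj_mul_le {Γ U : E →L[ℂ] E} (hΓ : 0 ≤ Γ) (hΓtc : IsTraceClass b Γ)
    (hU : U ∈ unitary (E →L[ℂ] E)) (hUsa : IsSelfAdjoint U) (hΓU : Γ * U = -Γ)
    (K : E →L[ℂ] E) :
    (‖trB b (adjoint (U * K * U) * K * Γ)‖ : ℂ) ≤
      trB b (adjoint K * K * Γ) := by
  set S := CFC.sqrt Γ
  have hS : IsSelfAdjoint S := IsSelfAdjoint.of_nonneg (CFC.sqrt_nonneg Γ)
  have hSb : Summable fun i => ‖S (b i)‖ ^ 2 := hΓtc.summable_norm_sqrt_apply_sq hΓ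
  have hSU : S * U = -S := sqrt_mul_eq_neg_of_mul_eq_neg hΓ hΓU
  have hUS : U * S = -S := by
    simpa only [star_mul, star_neg, hS.star_eq, hUsa.star_eq] using congrArg star hSU
  have htr : ∀ L : E →L[ℂ] E, trB b (adjoint L * K * Γ) =
      ∑' i, ⟪L (S (b i)), K (S (b i))⟫_ℂ := fun L => by
    rw [← CFC.sqrt_mul_sqrt_self Γ hΓ, trB_mul_mul_self b hS hSb]
    simp only [mul_apply_eq_comp, adjoint_inner_right]
  have hnorm : ∀ u, ‖(U * K * U) (S u)‖ = ‖K (S u)‖ := fun u => by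
    rw [mul_apply_eq_comp, ← mul_apply_eq_comp U S, hUS, neg_apply, map_neg,
      norm_neg, mul_apply_eq_comp, norm_map_of_mem_unitary hU]
  have hdiag : ∑' i, ⟪K (S (b i)), K (S (b i))⟫_ℂ = ((∑' i, ‖K (S (b i))‖ ^ 2 : ℝ) : ℂ) := by
    rw [Complex.ofReal_tsum]
    refine tsum_congr fun i => ?_
    rw [inner_self_eq_norm_sq_to_K]
    push_cast
    rfl
  rw [htr, htr, hdiag]
  exact Complex.real_le_real.mpr <|
    norm_tsum_inner_le_tsum_norm_sq (fun i => hnorm (b i)) (K.summable_norm_sq_comp hSb)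

end Antisymmetric

theorem p_condition_cross_term_bound_general {H H2 : Type*}
    [NormedAddCommGroup H] [InnerProductSpace ℂ H] [CompleteSpace H]
    [NormedAddCommGroup H2] [InnerProductSpace ℂ H2] [CompleteSpace H2]
    (e : HilbertBasis ℕ ℂ H) (e2 : HilbertBasis ℕ ℂ H2)
    (T : HilbertTensor H H2)
    (Γ : H2 →L[ℂ] H2)
    -- admissibility of (γ, Γ)
    (hΓtc : IsTraceClass e2 Γ)
    (hex2 : Γ * T.ex = -Γ)
    -- P-condition
    (hPcond : Γ.IsPositive)
    -- X an orthogonal projection on H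
    (X : H →L[ℂ] H) (hX : IsSelfAdjoint X) (hXidem : X * X = X)
    -- P is the spectral projection of γ onto eigenvalues > 1/2 (P⊥ = 1 - P);
    -- `e` is an orthonormal eigenbasis of γ with eigenvalues `lam`
    (lam : ℕ → ℝ)
    (P : H →L[ℂ] H) (hPdef : ∀ k, P (e k) = if 1/2 < lam k then (e k : H) else 0) :
    (‖trB e2 (T.map ((1 - P) * X * P) (P * X * (1 - P)) * Γ)‖ : ℂ) ≤ trB e2 (T.map (P * X * P) ((1 - P) * X * (1 - P)) * Γ) := by
  have hP : IsSelfAdjoint P :=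
    e.isSelfAdjoint_of_apply_eq_smul (fun k => if 1/2 < lam k then 1 else 0) fun k => by
      rw [hPdef]
      split_ifs <;> simp
  have hXproj : IsStarProjection X := ⟨hXidem, hX⟩
  have hPc : star (1 - P) = 1 - P := by rw [star_sub, star_one, hP.star_eq]
  set K := T.map (X * P) (X * (1 - P))
  have hcross : T.map ((1 - P) * X * P) (P * X * (1 - P)) = adjoint (T.ex * K * T.ex) * K := by
    rw [T.ex_mul_map_mul_ex, ← star_eq_adjoint, T.star_map, T.map_mul,
      hXproj.star_mul_mul_mul, hXproj.star_mul_mul_mul, hP.star_eq, hPc]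
  have hdiag : T.map (P * X * P) ((1 - P) * X * (1 - P)) = adjoint K * K := by
    rw [← star_eq_adjoint, T.star_map, T.map_mul, hXproj.star_mul_mul_mul,
      hXproj.star_mul_mul_mul, hP.star_eq, hPc]
  rw [hcross, hdiag]
  exact norm_trB_adjoint_conj_mul_le e2 ((nonneg_iff_isPositive Γ).mpr hPcond) hΓtc
    T.ex_mem_unitary T.isSelfAdjoint_ex hex2 K

theorem p_condition_cross_term_bound {H H2 : Type*}
    [NormedAddCommGroup H] [InnerProductSpace ℂ H] [CompleteSpace H]
    [NormedAddCommGroup H2] [InnerProductSpace ℂ H2] [CompleteSpace H2]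
    (e : HilbertBasis ℕ ℂ H) (e2 : HilbertBasis ℕ ℂ H2)
    (T : HilbertTensor H H2)
    (γ : H →L[ℂ] H) (Γ : H2 →L[ℂ] H2) (N : ℕ)
    -- admissibility of (γ, Γ)
    (hγpos : γ.IsPositive) (hγle1 : (1 - γ).IsPositive)
    (hγtc : IsTraceClass e γ) (hγtr : trB e γ = (N : ℂ))
    (hΓtc : IsTraceClass e2 Γ)
    (hex1 : T.ex * Γ = -Γ) (hex2 : Γ * T.ex = -Γ)
    -- P-condition
    (hPcond : Γ.IsPositive)
    -- X an orthogonal projection on H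
    (X : H →L[ℂ] H) (hX : IsSelfAdjoint X) (hXidem : X * X = X)
    -- P is the spectral projection of γ onto eigenvalues > 1/2 (P⊥ = 1 - P);
    -- `e` is an orthonormal eigenbasis of γ with eigenvalues `lam`
    (lam : ℕ → ℝ) (heig : ∀ k, γ (e k) = (lam k : ℂ) • e k)
    (P : H →L[ℂ] H) (hPdef : ∀ k, P (e k) = if 1/2 < lam k then (e k : H) else 0) :
    (‖trB e2 (T.map ((1 - P) * X * P) (P * X * (1 - P)) * Γ)‖ : ℂ) ≤ trB e2 (T.map (P * X * P) ((1 - P) * X * (1 - P)) * Γ) :=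
  p_condition_cross_term_bound_general e e2 T Γ hΓtc hex2 hPcond X hX hXidem lam P hPdef
end
end

section
/- Let γ be a trace-class operator on ℋ with 0 ≤ γ ≤ 1, let X be an orthogonal projection on ℋ, and let P, P^⊥ be the spectral projections of γ for eigenvalues > 1/2 and ≤ 1/2. Then tr(P^⊥XPγPXP^⊥) ≤ tr(Xγ) and tr(PXP^⊥γP^⊥XP) ≤ 4·tr(Xγ)·tr(X(γ−γ²)). -/
open scoped ComplexOrder
open ContinuousLinearMap

noncomputable section

/-!
In the eigenbasis `e` of `γ` every operator involved is diagonal except `X`, so with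
`M j k = ‖⟪e j, X (e k)⟫‖²` both exchange terms are double sums `∑ₖ ∑ⱼ w j k * λⱼ * M j k`
with weights `w j k ∈ {0, 1}`, while `tr(Xγ) = ∑ⱼ λⱼ ‖X eⱼ‖²`. The rows of `M` sum to
`‖X eⱼ‖²`, which bounds the first term by `tr(Xγ)`. In the second term only pairs with
`λⱼ ≤ 1/2 < λₖ` survive; for those `1 ≤ 4 (1 - λⱼ) λₖ`, and `M j k ≤ ‖X eⱼ‖² ‖X eₖ‖²` because
`X` is a projection, so the double sum is at most
`4 (∑ₖ λₖ ‖X eₖ‖²) (∑ⱼ λⱼ (1 - λⱼ) ‖X eⱼ‖²)`.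
-/

open scoped InnerProductSpace

section RealDoubleSums

variable {β γ : Type*}

theorem tsum_tsum_le_tsum_of_le {F G : β → γ → ℝ} {g : β → ℝ} (hF : ∀ j k, 0 ≤ F j k)
    (hFG : ∀ j k, F j k ≤ G j k) (hG : ∀ j, HasSum (G j) (g j)) (hg : Summable g) :
    ∑' k, ∑' j, F j k ≤ ∑' j, g j := by
  have hGs : Summable (Function.uncurry G) :=
    (summable_prod_of_nonneg fun p => (hF p.1 p.2).trans (hFG p.1 p.2)).2
      ⟨fun j => (hG j).summable, by simpa only [(hG _).tsum_eq] using hg⟩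
  have hFs : Summable (Function.uncurry F) :=
    hGs.of_nonneg_of_le (fun p => hF p.1 p.2) fun p => hFG p.1 p.2
  calc ∑' k, ∑' j, F j k = ∑' j, ∑' k, F j k := hFs.tsum_comm
    _ ≤ ∑' j, ∑' k, G j k :=
      Summable.tsum_le_tsum (fun j => Summable.tsum_le_tsum (hFG j) (hFs.prod_factor j)
        (hGs.prod_factor j)) hFs.prod hGs.prod
    _ = ∑' j, g j := tsum_congr fun j => (hG j).tsum_eq

theorem tsum_tsum_le_tsum_mul_tsum_of_le {F : β → γ → ℝ} {a : β → ℝ} {b : γ → ℝ}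
    (hF : ∀ j k, 0 ≤ F j k) (hFab : ∀ j k, F j k ≤ a j * b k) (ha : Summable a)
    (hb : Summable b) : ∑' k, ∑' j, F j k ≤ (∑' j, a j) * ∑' k, b k := by
  have hslice (k : γ) : ∑' j, F j k ≤ (∑' j, a j) * b k :=
    (Summable.tsum_le_tsum (hFab · k) ((ha.mul_right (b k)).of_nonneg_of_le (hF · k) (hFab · k))
      (ha.mul_right (b k))).trans_eq tsum_mul_right
  rw [← tsum_mul_left]
  exact Summable.tsum_le_tsum hslice
    ((hb.mul_left _).of_nonneg_of_le (fun k => tsum_nonneg (hF · k)) hslice) (hb.mul_left _)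

end RealDoubleSums

section Operators

variable {H ι : Type*} [NormedAddCommGroup H] [InnerProductSpace ℂ H]

namespace HilbertBasis

variable (e : HilbertBasis ι ℂ H)

theorem inner_apply_of_apply_eq_smul {T : H →L[ℂ] H} {μ : ι → ℂ}
    (hT : ∀ j, T (e j) = μ j • e j) (w : H) (k : ι) : ⟪e k, T w⟫_ℂ = μ k * ⟪e k, w⟫_ℂ := by
  classical
  have h := ((e.hasSum_repr w).mapL T).mapL (innerSL ℂ (e k))
  simp only [innerSL_apply_apply, map_smul, hT, e.repr_apply_apply, smul_eq_mul,
    orthonormal_iff_ite.mp e.orthonormal] at h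
  refine h.unique ((hasSum_ite_eq k (μ k * ⟪e k, w⟫_ℂ)).congr_fun fun j => ?_)
  by_cases hj : j = k
  · subst hj
    simp [mul_comm]
  · simp [hj, Ne.symm hj]

theorem hasSum_inner_apply_self_of_apply_eq_smul {T : H →L[ℂ] H} {d : ι → ℝ}
    (hT : ∀ j, T (e j) = (d j : ℂ) • e j) (u : H) :
    HasSum (fun j => ((d j * ‖⟪e j, u⟫_ℂ‖ ^ 2 : ℝ) : ℂ)) ⟪u, T u⟫_ℂ := by
  refine (e.hasSum_inner_mul_inner u (T u)).congr_fun fun j => ?_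
  rw [e.inner_apply_of_apply_eq_smul hT, ← inner_conj_symm u (e j), mul_left_comm,
    Complex.conj_mul']
  push_cast
  rfl

theorem hasSum_norm_inner_sq_s19 (u : H) : HasSum (fun j => ‖⟪e j, u⟫_ℂ‖ ^ 2) (‖u‖ ^ 2) := by
  have h := e.hasSum_inner_apply_self_of_apply_eq_smul (T := 1) (d := 1) (by simp) u
  rw [one_apply_eq_self, inner_self_eq_norm_sq_to_K] at h
  simp only [Pi.one_apply, one_mul] at h
  rwa [← Complex.hasSum_ofReal, Complex.ofReal_pow]

theorem hasSum_inner_sandwich [CompleteSpace H] {A D X : H →L[ℂ] H} {a d : ι → ℝ}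
    (hA : ∀ j, A (e j) = (a j : ℂ) • e j) (hD : ∀ j, D (e j) = (d j : ℂ) • e j)
    (hX : IsSelfAdjoint X) (k : ι) :
    HasSum (fun j => ((a k ^ 2 * (d j * ‖⟪e j, X (e k)⟫_ℂ‖ ^ 2) : ℝ) : ℂ))
      ⟪e k, (A * X * D * X * A) (e k)⟫_ℂ := by
  have h : ⟪e k, (A * X * D * X * A) (e k)⟫_ℂ = (a k ^ 2 : ℝ) * ⟪X (e k), D (X (e k))⟫_ℂ := by
    have hXs : ⟪X (e k), D (X (e k))⟫_ℂ = ⟪e k, X (D (X (e k)))⟫_ℂ := hX.isSymmetric _ _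
    simp only [mul_apply_eq_comp, e.inner_apply_of_apply_eq_smul hA, hA k, map_smul,
      inner_smul_right, hXs]
    push_cast
    ring
  rw [h]
  refine ((e.hasSum_inner_apply_self_of_apply_eq_smul hD (X (e k))).mul_left _).congr_fun
    fun j => ?_
  push_cast
  rfl

theorem hasSum_norm_inner_apply_sq [CompleteSpace H] {X : H →L[ℂ] H} (hX : IsSelfAdjoint X)
    (j : ι) : HasSum (fun k => ‖⟪e j, X (e k)⟫_ℂ‖ ^ 2) (‖X (e j)‖ ^ 2) := by
  refine (e.hasSum_norm_inner_sq_s19 (X (e j))).congr_fun fun k => ?_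
  have hXs : ⟪X (e k), e j⟫_ℂ = ⟪e k, X (e j)⟫_ℂ := hX.isSymmetric _ _
  rw [← hXs, norm_inner_symm]

end HilbertBasis

theorem trB_eq_ofReal_tsum (e : HilbertBasis ι ℂ H) {T : H →L[ℂ] H} {f : ι → ℝ}
    (h : ∀ k, ⟪e k, T (e k)⟫_ℂ = f k) : trB e T = ((∑' k, f k : ℝ) : ℂ) := by
  simp only [trB, h, Complex.ofReal_tsum]

theorem ContinuousLinearMap.IsPositive.nonneg_of_apply_eq_smul {T : H →L[ℂ] H}
    (hT : T.IsPositive) {v : H} (hv : v ≠ 0) {μ : ℝ} (h : T v = (μ : ℂ) • v) : 0 ≤ μ := by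
  have hpos := hT.inner_nonneg_right v
  rw [h, inner_smul_right, inner_self_eq_norm_sq_to_K] at hpos
  have hpos' : 0 ≤ μ * ‖v‖ ^ 2 := Complex.zero_le_real.mp (by push_cast; exact hpos)
  exact nonneg_of_mul_nonneg_left hpos' (by positivity)

theorem mul_mul_apply_eq_smul {A B : H →L[ℂ] H} {v : H} {a b : ℝ} (hA : A v = (a : ℂ) • v)
    (hB : B v = (b : ℂ) • v) : (A * B * A) v = ((a ^ 2 * b : ℝ) : ℂ) • v := by
  simp only [mul_apply_eq_comp, hA, hB, map_smul, smul_smul]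
  push_cast
  ring_nf

theorem one_sub_apply_eq_smul {P : H →L[ℂ] H} {v : H} {c : ℝ} (h : P v = (c : ℂ) • v) :
    (1 - P) v = ((1 - c : ℝ) : ℂ) • v := by
  simp [h, sub_smul]

theorem apply_eq_smul_of_apply_eq_ite {e : HilbertBasis ι ℂ H} {P : H →L[ℂ] H} {lam : ι → ℝ}
    (hP : ∀ k, P (e k) = if 1/2 < lam k then e k else 0) (k : ι) :
    P (e k) = ((if 1/2 < lam k then 1 else 0 : ℝ) : ℂ) • e k := by
  rw [hP]
  split_ifs <;> simp

variable [CompleteSpace H]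

namespace IsStarProjection

variable {X : H →L[ℂ] H}

theorem inner_apply_eq_inner_apply_apply (hX : IsStarProjection X) (u v : H) :
    ⟪u, X v⟫_ℂ = ⟪X u, X v⟫_ℂ := by
  have hXs : ⟪X u, X v⟫_ℂ = ⟪u, X (X v)⟫_ℂ := hX.isSelfAdjoint.isSymmetric _ _
  rw [hXs, ← mul_apply_eq_comp X X, hX.isIdempotentElem.eq]

theorem inner_apply_self_eq_norm_sq (hX : IsStarProjection X) (u : H) :
    ⟪u, X u⟫_ℂ = ((‖X u‖ ^ 2 : ℝ) : ℂ) := by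
  rw [hX.inner_apply_eq_inner_apply_apply, inner_self_eq_norm_sq_to_K]
  push_cast
  rfl

theorem norm_apply_le (hX : IsStarProjection X) (u : H) : ‖X u‖ ≤ ‖u‖ :=
  (X.le_opNorm u).trans (mul_le_of_le_one_left (norm_nonneg u) (IsStarProjection.norm_le X hX))

theorem norm_inner_apply_sq_le (hX : IsStarProjection X) (u v : H) :
    ‖⟪u, X v⟫_ℂ‖ ^ 2 ≤ ‖X u‖ ^ 2 * ‖X v‖ ^ 2 := by
  rw [hX.inner_apply_eq_inner_apply_apply, ← mul_pow]
  exact pow_le_pow_left₀ (norm_nonneg _) (norm_inner_le_norm _ _) 2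

end IsStarProjection

theorem IsTraceClass.summable_eigenvalues {e : HilbertBasis ι ℂ H} {γ : H →L[ℂ] H}
    (htc : IsTraceClass e γ) (hγ : γ.IsPositive) {lam : ι → ℝ}
    (heig : ∀ k, γ (e k) = (lam k : ℂ) • e k) : Summable lam := by
  have hsqrt : CFC.sqrt (adjoint γ * γ) = γ := by
    rw [← star_eq_adjoint, hγ.isSelfAdjoint.star_eq]
    exact CFC.sqrt_mul_self γ ((nonneg_iff_isPositive γ).2 hγ)
  rw [IsTraceClass, hsqrt] at htc
  simp only [heig, inner_smul_right, inner_self_eq_norm_sq_to_K, e.orthonormal.1,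
    RCLike.ofReal_one, one_pow, mul_one] at htc
  exact Complex.summable_ofReal.mp htc

theorem trB_mul_eq_tsum (e : HilbertBasis ι ℂ H) {X D : H →L[ℂ] H} {d : ι → ℝ}
    (hX : IsStarProjection X) (hD : ∀ j, D (e j) = (d j : ℂ) • e j) :
    trB e (X * D) = ((∑' k, d k * ‖X (e k)‖ ^ 2 : ℝ) : ℂ) :=
  trB_eq_ofReal_tsum e fun k => by
    rw [mul_apply_eq_comp, hD, map_smul, inner_smul_right, hX.inner_apply_self_eq_norm_sq]
    push_cast
    rfl

theorem trB_sandwich_eq_tsum (e : HilbertBasis ι ℂ H) {A D X : H →L[ℂ] H} {a d : ι → ℝ}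
    (hA : ∀ j, A (e j) = (a j : ℂ) • e j) (hD : ∀ j, D (e j) = (d j : ℂ) • e j)
    (hX : IsSelfAdjoint X) :
    trB e (A * X * D * X * A) =
      ((∑' k, ∑' j, a k ^ 2 * (d j * ‖⟪e j, X (e k)⟫_ℂ‖ ^ 2) : ℝ) : ℂ) :=
  trB_eq_ofReal_tsum e fun k => by
    rw [← (e.hasSum_inner_sandwich hA hD hX k).tsum_eq, Complex.ofReal_tsum]

theorem summable_mul_norm_apply_sq (e : HilbertBasis ι ℂ H) {X : H →L[ℂ] H}
    (hX : IsStarProjection X) {w : ι → ℝ} (hw : ∀ k, 0 ≤ w k) (hsum : Summable w) :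
    Summable fun k => w k * ‖X (e k)‖ ^ 2 := by
  refine hsum.of_nonneg_of_le (fun k => mul_nonneg (hw k) (sq_nonneg _))
    fun k => mul_le_of_le_one_right (hw k) ?_
  have h := hX.norm_apply_le (e k)
  rw [e.orthonormal.1 k] at h
  exact pow_le_one₀ (norm_nonneg _) h

end Operators

theorem exchange_weight_le {x y : ℝ} (hx₀ : 0 ≤ x) (hx₁ : x ≤ 1) (hy : 0 ≤ y) :
    (if 1/2 < y then (1 : ℝ) else 0) ^ 2 * ((1 - if 1/2 < x then (1 : ℝ) else 0) ^ 2 * x) ≤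
      4 * (x * (1 - x)) * y := by
  have hrhs : 0 ≤ 4 * (x * (1 - x)) * y := by
    have := sub_nonneg.2 hx₁
    positivity
  split_ifs with hy' hx'
  · simpa using hrhs
  · nlinarith [mul_nonneg hx₀ (mul_nonneg (sub_nonneg.2 (not_lt.1 hx')) (sub_nonneg.2 hy'.le))]
  · simpa using hrhs
  · simpa using hrhs

theorem tsum_tsum_exchange_le {ι : Type*} {lam s : ι → ℝ} {M : ι → ι → ℝ}
    (hlam : ∀ k, 0 ≤ lam k ∧ lam k ≤ 1) (hM : ∀ j k, 0 ≤ M j k ∧ M j k ≤ s j * s k)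
    (ha : Summable fun j => lam j * (1 - lam j) * s j) (hb : Summable fun k => lam k * s k) :
    ∑' k, ∑' j, (if 1/2 < lam k then (1 : ℝ) else 0) ^ 2 *
        ((1 - if 1/2 < lam j then (1 : ℝ) else 0) ^ 2 * lam j * M j k) ≤
      4 * (∑' k, lam k * s k) * ∑' j, lam j * (1 - lam j) * s j := by
  refine (tsum_tsum_le_tsum_mul_tsum_of_le (a := fun j => 4 * (lam j * (1 - lam j) * s j))
    (fun j k => ?_) (fun j k => ?_) (ha.mul_left 4) hb).trans_eq ?_
  · have := (hlam j).1
    have := (hM j k).1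
    positivity
  · have hw := exchange_weight_le (hlam j).1 (hlam j).2 (hlam k).1
    have := (hlam j).1
    have := (hM j k).1
    rw [← mul_assoc]
    calc _ ≤ 4 * (lam j * (1 - lam j)) * lam k * (s j * s k) :=
        mul_le_mul hw (hM j k).2 (by positivity) (hw.trans' (by positivity))
      _ = 4 * (lam j * (1 - lam j) * s j) * (lam k * s k) := by ring
  · rw [tsum_mul_left]
    ring

section ExchangeTerms

variable {H ι : Type*} [NormedAddCommGroup H] [InnerProductSpace ℂ H] [CompleteSpace H]
  {e : HilbertBasis ι ℂ H} {γ X P : H →L[ℂ] H} {lam : ι → ℝ}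

theorem trB_exchange_le_trB_mul (hlam : ∀ k, 0 ≤ lam k ∧ lam k ≤ 1) (hsum : Summable lam)
    (heig : ∀ k, γ (e k) = (lam k : ℂ) • e k) (hX : IsStarProjection X)
    (hP : ∀ k, P (e k) = if 1/2 < lam k then e k else 0) :
    trB e ((1 - P) * X * P * γ * P * X * (1 - P)) ≤ trB e (X * γ) := by
  rw [show (1 - P) * X * P * γ * P * X * (1 - P) = (1 - P) * X * (P * γ * P) * X * (1 - P) by
      simp only [mul_assoc],
    trB_sandwich_eq_tsum e (fun k => one_sub_apply_eq_smul (apply_eq_smul_of_apply_eq_ite hP k))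
      (fun k => mul_mul_apply_eq_smul (apply_eq_smul_of_apply_eq_ite hP k) (heig k))
      hX.isSelfAdjoint,
    trB_mul_eq_tsum e hX heig, Complex.real_le_real]
  refine tsum_tsum_le_tsum_of_le (fun j k => ?_) (fun j k => ?_)
    (fun j => (e.hasSum_norm_inner_apply_sq hX.isSelfAdjoint j).mul_left (lam j))
    (summable_mul_norm_apply_sq e hX (fun k => (hlam k).1) hsum)
  · have := (hlam j).1
    positivity
  · have := (hlam j).1
    split_ifs <;> norm_num <;> positivity

theorem trB_exchange_le_four_mul (hlam : ∀ k, 0 ≤ lam k ∧ lam k ≤ 1) (hsum : Summable lam)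
    (heig : ∀ k, γ (e k) = (lam k : ℂ) • e k) (hX : IsStarProjection X)
    (hP : ∀ k, P (e k) = if 1/2 < lam k then e k else 0) :
    trB e (P * X * (1 - P) * γ * (1 - P) * X * P) ≤
      4 * trB e (X * γ) * trB e (X * (γ - γ * γ)) := by
  have hγγ (k : ι) : (γ - γ * γ) (e k) = ((lam k * (1 - lam k) : ℝ) : ℂ) • e k := by
    simp only [sub_apply, mul_apply_eq_comp, heig, map_smul, smul_smul, ← sub_smul]
    push_cast
    ring_nf
  have hvar (j : ι) : 0 ≤ lam j * (1 - lam j) := mul_nonneg (hlam j).1 (sub_nonneg.2 (hlam j).2)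
  have hvar_sum : Summable fun j => lam j * (1 - lam j) :=
    hsum.of_nonneg_of_le hvar fun j => mul_le_of_le_one_right (hlam j).1 (by linarith [hlam j])
  rw [show P * X * (1 - P) * γ * (1 - P) * X * P = P * X * ((1 - P) * γ * (1 - P)) * X * P by
      simp only [mul_assoc],
    trB_sandwich_eq_tsum e (apply_eq_smul_of_apply_eq_ite hP)
      (fun k => mul_mul_apply_eq_smul
        (one_sub_apply_eq_smul (apply_eq_smul_of_apply_eq_ite hP k)) (heig k))
      hX.isSelfAdjoint,
    trB_mul_eq_tsum e hX heig, trB_mul_eq_tsum e hX hγγ]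
  have h := tsum_tsum_exchange_le (s := fun k => ‖X (e k)‖ ^ 2)
    (M := fun j k => ‖⟪e j, X (e k)⟫_ℂ‖ ^ 2) hlam
    (fun j k => ⟨sq_nonneg _, hX.norm_inner_apply_sq_le _ _⟩)
    (summable_mul_norm_apply_sq e hX hvar hvar_sum)
    (summable_mul_norm_apply_sq e hX (fun k => (hlam k).1) hsum)
  exact_mod_cast h

end ExchangeTerms

theorem exchange_term_bounds {H : Type*} [NormedAddCommGroup H] [InnerProductSpace ℂ H] [CompleteSpace H]
    (e : HilbertBasis ℕ ℂ H) (γ : H →L[ℂ] H)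
    (hγpos : γ.IsPositive) (hγle1 : (1 - γ).IsPositive) (hγtc : IsTraceClass e γ)
    (X : H →L[ℂ] H) (hX : IsSelfAdjoint X) (hXidem : X * X = X)
    -- P is the spectral projection of γ onto eigenvalues > 1/2 (P⊥ = 1 - P);
    -- `e` is an orthonormal eigenbasis of γ with eigenvalues `lam`
    (lam : ℕ → ℝ) (heig : ∀ k, γ (e k) = (lam k : ℂ) • e k)
    (P : H →L[ℂ] H) (hPdef : ∀ k, P (e k) = if 1/2 < lam k then (e k : H) else 0) :
    trB e ((1 - P) * X * P * γ * P * X * (1 - P)) ≤ trB e (X * γ)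
    ∧ trB e (P * X * (1 - P) * γ * (1 - P) * X * P) ≤
        4 * trB e (X * γ) * trB e (X * (γ - γ * γ)) := by
  have hXproj : IsStarProjection X := ⟨hXidem, hX⟩
  have hlam (k : ℕ) : 0 ≤ lam k ∧ lam k ≤ 1 := by
    have hek := e.orthonormal.ne_zero k
    have hcompl : (1 - γ) (e k) = ((1 - lam k : ℝ) : ℂ) • e k := by simp [heig, sub_smul]
    exact ⟨hγpos.nonneg_of_apply_eq_smul hek (heig k),
      sub_nonneg.1 (hγle1.nonneg_of_apply_eq_smul hek hcompl)⟩
  have hsum := hγtc.summable_eigenvalues hγpos heig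
  exact ⟨trB_exchange_le_trB_mul hlam hsum heig hXproj hPdef,
    trB_exchange_le_four_mul hlam hsum heig hXproj hPdef⟩
end
end
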